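/- Let n ≥ 1 and let H = {w_1, …, w_T} be a set of T distinct vectors spanning ℝ^{n+1}. Let p_1, …, p_T be real numbers with p_1 + ⋯ + p_T = 1. Let W = (w_{i_1}, …, w_{i_n}) be an ordered n-tuple of distinct, linearly independent vectors from H, and write L_n(W) ∩ H = {w_{j_1}, …, w_{j_{q_n^W}}}. Then the sum, over all permutations γ of {1, …, T} satisfying: w_{γ(1)} ∉ L_n(W), γ^{-1}(i_1) < ⋯ < γ^{-1}(i_n), and for every l = 1, …, n, min{ γ^{-1}(j) : w_j ∈ L_l(W) ∩ H } = γ^{-1}(i_{n-l+1}), of the weight p_{γ(1)} / (T−1)!, equals (1 − p_{j_1} − p_{j_2} − ⋯ − p_{j_{q_n^W}}) / (q_n^W · q_{n-1}^W ⋯ q_1^W). -/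

import Mathlib

/-!
Read a permutation `γ` as the arrangement with `γ k` in position `k`. For `a, b` in a finite set
`S`, left multiplication by the transposition `(a b)` exchanges the arrangements in which `b` comes
first among `S` with those in which `a` does; so, for a weight invariant under these
transpositions, requiring `a` to come first in `S` divides the weighted sum by `#S`.

Apply this along the flag `L_n(W) ⊇ ⋯ ⊇ L_1(W)`. The transpositions used for `L_l(W) ∩ H` fix the
weight `p_{γ(1)} · [w_{γ(1)} ∉ L_n(W)]`, and, because `w_{i_{n-l'+1}} ∉ L_l(W)` for `l' > l` by
linear independence, they also preserve the requirements for the larger subspaces. Starting from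
the unrestricted sum `(T-1)! (1 - Σ_{w_j ∈ L_n(W)} p_j)`, the `n` requirements divide it by
`q_n^W ⋯ q_1^W`; they also force `γ⁻¹(i_1) < ⋯ < γ⁻¹(i_n)`.
-/


open scoped Classical

/-- `flagSpan w i l = span {w (i k) : k ≥ l}`.  For `l : Fin n` (0-based) this is the
paper's flag subspace `L_{n-l}(W)`; in particular `flagSpan w i 0` is the full span
`L_n(W) = span (w_{i_1}, …, w_{i_n})` and `flagSpan w i (n-1) = L_1(W) = span (w_{i_n})`. -/
def flagSpan {n T : ℕ} (w : Fin T → (Fin (n + 1) → ℝ)) (i : Fin n → Fin T)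
    (l : Fin n) : Submodule ℝ (Fin (n + 1) → ℝ) :=
  Submodule.span ℝ {x | ∃ k : Fin n, l ≤ k ∧ x = w (i k)}

/-- `flagQ w i l = |L_{n-l}(W) ∩ H|` : the number of indices `j` with `w j` in the
flag subspace `flagSpan w i l`. -/
noncomputable def flagQ {n T : ℕ} (w : Fin T → (Fin (n + 1) → ℝ)) (i : Fin n → Fin T)
    (l : Fin n) : ℕ :=
  Set.ncard {j : Fin T | w j ∈ flagSpan w i l}

open Finset Equiv

section ComesFirst

variable {α : Type*} [LinearOrder α]

/-- Reading `γ` as the arrangement placing `γ k` at position `k`, `a` is placed no later than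
any element of `S`. -/
def ComesFirst (γ : Perm α) (S : Finset α) (a : α) : Prop :=
  ∀ j ∈ S, γ.symm a ≤ γ.symm j

theorem comesFirst_swap_mul_iff [DecidableEq α] {γ : Perm α} {S : Finset α} {a b : α}
    (ha : a ∈ S) (hb : b ∈ S) (x : α) :
    ComesFirst (swap a b * γ) S x ↔ ComesFirst γ S (swap a b x) := by
  have hS : ∀ j, swap a b j ∈ S ↔ j ∈ S := fun j => by
    rw [swap_apply_def]; split_ifs with h₁ h₂ <;> simp_all
  simp only [ComesFirst, Perm.mul_def, symm_trans_apply, symm_swap]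
  constructor
  · intro h j hj
    simpa using h (swap a b j) ((hS j).mpr hj)
  · exact fun h j hj => h _ ((hS j).mpr hj)

theorem exists_filter_comesFirst_eq_singleton (γ : Perm α) {S : Finset α} (hS : S.Nonempty) :
    ∃ b, {b ∈ S | ComesFirst γ S b} = {b} := by
  obtain ⟨b, hb, hmin⟩ := S.exists_min_image γ.symm hS
  refine ⟨b, eq_singleton_iff_unique_mem.mpr ⟨mem_filter.mpr ⟨hb, hmin⟩, ?_⟩⟩
  intro c hc
  rw [mem_filter] at hc
  exact γ.symm.injective (le_antisymm (hc.2 b hb) (hmin c hc.1))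

theorem strictMono_symm_comp_of_comesFirst {n : ℕ} {S : Fin n → Finset α} {a : Fin n → α}
    (hS : Antitone S) (ha : ∀ k, a k ∈ S k) (ha_not : ∀ l k, l < k → a l ∉ S k) {γ : Perm α}
    (h : ∀ l, ComesFirst γ (S l) (a l)) : StrictMono fun k => γ.symm (a k) := by
  intro l k hlk
  refine (h l (a k) (hS hlk.le (ha k))).lt_of_ne fun heq => ha_not l k hlk ?_
  rw [γ.symm.injective heq]
  exact ha k

variable {M : Type*} [AddCommMonoid M]

theorem sum_eq_sum_sum_comesFirst (s : Finset (Perm α)) {S : Finset α} (hS : S.Nonempty)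
    (g : Perm α → M) : ∑ γ ∈ s, g γ = ∑ b ∈ S, ∑ γ ∈ s with ComesFirst γ S b, g γ := by
  simp only [sum_filter]
  rw [sum_comm]
  refine sum_congr rfl fun γ _ => ?_
  obtain ⟨b, hb⟩ := exists_filter_comesFirst_eq_singleton γ hS
  rw [← sum_filter, hb, sum_singleton]

variable [Fintype α] [DecidableEq α]

theorem card_smul_sum_comesFirst {S : Finset α} {a : α} (ha : a ∈ S) (P : Perm α → Prop)
    [DecidablePred P] (g : Perm α → M) (hP : ∀ b ∈ S, ∀ γ, P (swap a b * γ) ↔ P γ)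
    (hg : ∀ b ∈ S, ∀ γ, g (swap a b * γ) = g γ) :
    #S • ∑ γ with P γ ∧ ComesFirst γ S a, g γ = ∑ γ with P γ, g γ := by
  rw [sum_eq_sum_sum_comesFirst {γ | P γ} ⟨a, ha⟩]
  refine (sum_const _).symm.trans (sum_congr rfl fun b hb => ?_)
  rw [filter_filter]
  refine sum_equiv (Equiv.mulLeft (swap a b)) (fun γ => ?_) (fun γ _ => (hg b hb γ).symm)
  simp only [mem_filter, mem_univ, true_and, coe_mulLeft, hP b hb,
    comesFirst_swap_mul_iff ha hb, swap_apply_right]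

theorem prod_card_smul_sum_comesFirst {n : ℕ} {S : Fin n → Finset α} {a : Fin n → α}
    (hS : Antitone S) (ha : ∀ k, a k ∈ S k) (ha_not : ∀ l k, l < k → a l ∉ S k) (g : Perm α → M)
    (hg : ∀ k, ∀ b ∈ S k, ∀ γ, g (swap (a k) b * γ) = g γ) :
    (∏ k, #(S k)) • ∑ γ with ∀ l, ComesFirst γ (S l) (a l), g γ = ∑ γ, g γ := by
  induction n with
  | zero => simp
  | succ n ih =>
    have hP : ∀ b ∈ S (Fin.last n), ∀ γ,
        (∀ l : Fin n, ComesFirst (swap (a (Fin.last n)) b * γ) (S l.castSucc) (a l.castSucc)) ↔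
          ∀ l : Fin n, ComesFirst γ (S l.castSucc) (a l.castSucc) := by
      intro b hb γ
      refine forall_congr' fun l => ?_
      have hlt := Fin.castSucc_lt_last l
      rw [comesFirst_swap_mul_iff (hS hlt.le (ha _)) (hS hlt.le hb), swap_apply_of_ne_of_ne]
      · exact fun h => ha_not _ _ hlt (h ▸ ha _)
      · exact fun h => ha_not _ _ hlt (h ▸ hb)
    simp only [Fin.forall_fin_succ' (P := fun l => ComesFirst _ (S l) (a l))]
    rw [Fin.prod_univ_castSucc, mul_smul, card_smul_sum_comesFirst (ha _) _ g hP (hg _)]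
    exact ih (hS.comp_monotone Fin.strictMono_castSucc.monotone) (fun k => ha _)
      (fun l k hlk => ha_not _ _ (Fin.castSucc_lt_castSucc_iff.mpr hlk)) (fun k => hg _)

end ComesFirst

theorem sum_perm_apply_zero {M : Type*} [AddCommMonoid M] {T : ℕ} (hT : 0 < T) (h : Fin T → M) :
    ∑ γ : Perm (Fin T), h (γ ⟨0, hT⟩) = (T - 1).factorial • ∑ x, h x := by
  obtain ⟨m, rfl⟩ := Nat.exists_eq_succ_of_ne_zero hT.ne'
  rw [← Perm.decomposeFin.symm.sum_comp, Fintype.sum_prod_type, smul_sum]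
  refine sum_congr rfl fun x _ => ?_
  simp [Perm.decomposeFin_symm_apply_zero, Fintype.card_perm]

theorem prod_card_smul_sum_comesFirst_apply {M : Type*} [AddCommMonoid M] {n T : ℕ} (hT : 0 < T)
    {S : Fin n → Finset (Fin T)} {a : Fin n → Fin T} (hS : Antitone S) (ha : ∀ k, a k ∈ S k)
    (ha_not : ∀ l k, l < k → a l ∉ S k) (f : Fin T → M) (hf : ∀ k, ∀ j ∈ S k, f j = f (a k)) :
    (∏ k, #(S k)) • ∑ γ with ∀ l, ComesFirst γ (S l) (a l), f (γ ⟨0, hT⟩) =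
      (T - 1).factorial • ∑ j, f j := by
  rw [prod_card_smul_sum_comesFirst hS ha ha_not _ fun k b hb γ => ?_, sum_perm_apply_zero]
  exact apply_swap_eq_self (hf k b hb).symm _

section Flag

variable {n T : ℕ}

noncomputable def flagFinset (w : Fin T → (Fin (n + 1) → ℝ)) (i : Fin n → Fin T) (l : Fin n) :
    Finset (Fin T) :=
  {j | w j ∈ flagSpan w i l}

@[simp]
theorem mem_flagFinset {w : Fin T → (Fin (n + 1) → ℝ)} {i : Fin n → Fin T} {l : Fin n}
    {j : Fin T} : j ∈ flagFinset w i l ↔ w j ∈ flagSpan w i l := by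
  simp [flagFinset]

variable (w : Fin T → (Fin (n + 1) → ℝ)) (i : Fin n → Fin T)

theorem flagSpan_antitone : Antitone (flagSpan w i) := fun _ _ hlk =>
  Submodule.span_mono fun _ ⟨m, hm, hx⟩ => ⟨m, hlk.trans hm, hx⟩

theorem flagSpan_le_span_range (l : Fin n) :
    flagSpan w i l ≤ Submodule.span ℝ (Set.range (w ∘ i)) :=
  Submodule.span_mono fun _ ⟨m, _, hx⟩ => ⟨m, hx.symm⟩

theorem flagFinset_antitone : Antitone (flagFinset w i) := fun _ _ hlk _ hj =>
  mem_flagFinset.mpr (flagSpan_antitone w i hlk (mem_flagFinset.mp hj))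

theorem mem_flagFinset_self (l : Fin n) : i l ∈ flagFinset w i l :=
  mem_flagFinset.mpr (Submodule.subset_span ⟨l, le_rfl, rfl⟩)

variable {w i}

theorem notMem_flagFinset_of_lt (hli : LinearIndependent ℝ (w ∘ i)) {l k : Fin n} (hlk : l < k) :
    i l ∉ flagFinset w i k := by
  have hset : {x | ∃ m : Fin n, k ≤ m ∧ x = w (i m)} = (w ∘ i) '' {m | k ≤ m} := by
    ext x
    simp [eq_comm]
  rw [mem_flagFinset, flagSpan, hset]
  exact hli.notMem_span_image (not_le.mpr hlk)

theorem comesFirst_flagFinset_iff (hli : LinearIndependent ℝ (w ∘ i)) (γ : Perm (Fin T)) :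
    (∀ l, ComesFirst γ (flagFinset w i l) (i l)) ↔
      (∀ a b : Fin n, a < b → γ.symm (i a) < γ.symm (i b)) ∧
      ∀ l : Fin n, ∀ j : Fin T, w j ∈ flagSpan w i l → γ.symm (i l) ≤ γ.symm j := by
  have hfirst : (∀ l, ComesFirst γ (flagFinset w i l) (i l)) ↔
      ∀ l : Fin n, ∀ j : Fin T, w j ∈ flagSpan w i l → γ.symm (i l) ≤ γ.symm j := by
    simp [ComesFirst]
  refine ⟨fun h => ⟨?_, hfirst.mp h⟩, fun h => hfirst.mpr h.2⟩
  exact fun _ _ hab => strictMono_symm_comp_of_comesFirst (flagFinset_antitone w i)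
    (mem_flagFinset_self w i) (fun _ _ => notMem_flagFinset_of_lt hli) h hab

theorem prod_flagQ_pos : 0 < ∏ l, (flagQ w i l : ℝ) := by
  refine prod_pos fun l _ => Nat.cast_pos.mpr ?_
  rw [flagQ, Set.ncard_pos]
  exact ⟨i l, mem_flagFinset.mp (mem_flagFinset_self w i l)⟩

theorem flagQ_eq_card (l : Fin n) : flagQ w i l = #(flagFinset w i l) := by
  rw [flagQ, Set.ncard_eq_toFinset_card', Set.toFinset_ofPred, flagFinset]

end Flag

theorem weighted_permutation_sum_general (n T : ℕ) (hT : 0 < T)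
    (w : Fin T → (Fin (n + 1) → ℝ))
    (p : Fin T → ℝ) (hp : ∑ j : Fin T, p j = 1)
    (i : Fin n → Fin T) (hli : LinearIndependent ℝ (w ∘ i)) :
    ∑ γ ∈ Finset.univ.filter (fun γ : Equiv.Perm (Fin T) =>
        w (γ ⟨0, hT⟩) ∉ Submodule.span ℝ (Set.range (w ∘ i)) ∧
        (∀ a b : Fin n, a < b → γ.symm (i a) < γ.symm (i b)) ∧
        (∀ l : Fin n, ∀ j : Fin T, w j ∈ flagSpan w i l → γ.symm (i l) ≤ γ.symm j)),
      p (γ ⟨0, hT⟩) / ((T - 1).factorial : ℝ) =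
    (1 - ∑ j ∈ Finset.univ.filter
        (fun j : Fin T => w j ∈ Submodule.span ℝ (Set.range (w ∘ i))), p j) /
      ∏ l : Fin n, (flagQ w i l : ℝ) := by
  set L := Submodule.span ℝ (Set.range (w ∘ i))
  set f : Fin T → ℝ := fun j => if w j ∉ L then p j else 0
  have hf_zero : ∀ k, ∀ j ∈ flagFinset w i k, f j = 0 := fun k j hj =>
    if_neg (not_not.mpr (flagSpan_le_span_range w i k (mem_flagFinset.mp hj)))
  have hchain := prod_card_smul_sum_comesFirst_apply hT (flagFinset_antitone w i)
    (mem_flagFinset_self w i) (fun _ _ => notMem_flagFinset_of_lt hli) f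
    fun k j hj => (hf_zero k j hj).trans (hf_zero k _ (mem_flagFinset_self w i k)).symm
  have htotal : ∑ j, f j = 1 - ∑ j with w j ∈ L, p j := by
    rw [← hp, ← sum_filter_add_sum_filter_not univ (w · ∈ L) p]
    simp [f, sum_ite]
  simp only [htotal, nsmul_eq_mul, Nat.cast_prod, ← flagQ_eq_card] at hchain
  simp only [← comesFirst_flagFinset_iff hli]
  rw [← sum_div, ← filter_filter, filter_comm, sum_filter,
    div_eq_div_iff (by positivity) prod_flagQ_pos.ne']
  linear_combination hchain

/-- The sum, over all permutations `γ` of `{1, …, T}` satisfying `w_{γ(1)} ∉ L_n(W)`,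
`γ⁻¹(i_1) < ⋯ < γ⁻¹(i_n)`, and (for every `l`) that the minimum of `γ⁻¹(j)` over `j`
with `w j ∈ L_l(W) ∩ H` is attained at `j = i_{n-l+1}`, of the weight `p_{γ(1)} / (T-1)!`,
equals `(1 - Σ_{j : w_j ∈ L_n(W)} p_j) / (q_n^W ⋯ q_1^W)`. -/
theorem weighted_permutation_sum (n T : ℕ) (hn : 1 ≤ n) (hT : 0 < T)
    (w : Fin T → (Fin (n + 1) → ℝ)) (hw : Function.Injective w)
    (hspan : Submodule.span ℝ (Set.range w) = ⊤)
    (p : Fin T → ℝ) (hp : ∑ j : Fin T, p j = 1)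
    (i : Fin n → Fin T) (hli : LinearIndependent ℝ (w ∘ i)) :
    ∑ γ ∈ Finset.univ.filter (fun γ : Equiv.Perm (Fin T) =>
        w (γ ⟨0, hT⟩) ∉ Submodule.span ℝ (Set.range (w ∘ i)) ∧
        (∀ a b : Fin n, a < b → γ.symm (i a) < γ.symm (i b)) ∧
        (∀ l : Fin n, ∀ j : Fin T, w j ∈ flagSpan w i l → γ.symm (i l) ≤ γ.symm j)),
      p (γ ⟨0, hT⟩) / ((T - 1).factorial : ℝ) =
    (1 - ∑ j ∈ Finset.univ.filter
        (fun j : Fin T => w j ∈ Submodule.span ℝ (Set.range (w ∘ i))), p j) /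
      ∏ l : Fin n, (flagQ w i l : ℝ) :=
  weighted_permutation_sum_general n T hT w p hp i hli
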